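/- arXiv:1508.05983 — 2 statements merged into one kernel-verified Lean document; each statement's English description precedes it below -/
import Mathlib

section
/- Let d ≥ 3, 0 < s < 1, and let b : ℝ^d → ℝ^d be measurable with |b(x)| ≤ 1_{{|x₁|<1}}(x) · |x₁|^{s−1}, where x = (x₁,…,x_d). Then b belongs to the Kato class K^{d+1}_0: for every δ > 0 there exists λ > 0 such that ess sup_{y ∈ ℝ^d} ∫_{ℝ^d} |b(x)| (λ−Δ)^{−1/2}(x,y) dx ≤ δ. -/
open MeasureTheory Filter Topology

noncomputable section

abbrev E (d : ℕ) := EuclideanSpace ℝ (Fin d)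

/-- The kernel `(λ−Δ)^{−s/2}(x,y)` for real `λ > 0`:
`Γ(s/2)⁻¹ ∫₀^∞ t^{s/2−1} e^{−λt} (4πt)^{−d/2} e^{−|x−y|²/(4t)} dt`. -/
def rker (d : ℕ) (s lam : ℝ) (x y : E d) : ℝ :=
  (Real.Gamma (s / 2))⁻¹ *
    ∫ t in Set.Ioi (0 : ℝ),
      t ^ (s / 2 - 1) * Real.exp (-(lam * t)) *
        ((4 * Real.pi * t) ^ (-(d : ℝ) / 2) * Real.exp (-(‖x - y‖ ^ 2 / (4 * t))))

/-- The operator `(λ−Δ)^{−s/2}` applied to a function `f`. -/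
def rop (d : ℕ) (s lam : ℝ) (f : E d → ℝ) (x : E d) : ℝ :=
  ∫ y, rker d s lam x y * f y

/-!
Writing `(λ - Δ)^{-1/2}` through the heat semigroup, the integral of
`w(x) = 1_{|x₁|<1} |x₁|^{s-1}` against the kernel is
`Γ(1/2)⁻¹ ∫₀^∞ t^{-1/2} e^{-λt} (e^{tΔ} w)(y) dt`. The heat kernel is a product of
one-dimensional Gaussians, so `(e^{tΔ} w)(y)` is a one-dimensional Gaussian average of
`|u|^{s-1}`; splitting at the Gaussian scale `|u| = √t` shows it is `O(t^{(s-1)/2})`,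
uniformly in `y`. Hence the integral is at most `C ∫₀^∞ t^{s/2-1} e^{-λt} dt = C Γ(s/2) λ^{-s/2}`,
which tends to `0` as `λ → ∞`.
-/

open Set Real ProbabilityTheory
open scoped NNReal ENNReal

lemma ofReal_integral_le_lintegral_ofReal {α : Type*} [MeasurableSpace α] {μ : Measure α}
    {f : α → ℝ} (hf : 0 ≤ᵐ[μ] f) :
    ENNReal.ofReal (∫ a, f a ∂μ) ≤ ∫⁻ a, ENNReal.ofReal (f a) ∂μ := by
  by_cases hfi : Integrable f μ
  · exact (ofReal_integral_eq_lintegral_ofReal hfi hf).le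
  · simp [integral_undef hfi]

lemma lintegral_ofReal_rpow_mul_exp_neg_mul_Ioi {a r : ℝ} (ha : 0 < a) (hr : 0 < r) :
    ∫⁻ t in Ioi 0, ENNReal.ofReal (t ^ (a - 1) * exp (-(r * t)))
      = ENNReal.ofReal (r ^ (-a) * Gamma a) := by
  have h := integral_rpow_mul_exp_neg_mul_Ioi ha hr
  rw [one_div, inv_rpow hr.le, ← rpow_neg hr.le] at h
  have hpos : 0 < ∫ t in Ioi (0 : ℝ), t ^ (a - 1) * exp (-(r * t)) := by
    rw [h]; exact mul_pos (rpow_pos_of_pos hr _) (Gamma_pos_of_pos ha)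
  rw [← h, ofReal_integral_eq_lintegral_ofReal (.of_integral_ne_zero hpos.ne')
    ((ae_restrict_iff' measurableSet_Ioi).2 (ae_of_all _ fun t (ht : 0 < t) => by positivity))]

def singWeight (s ε : ℝ) : ℝ → ℝ :=
  indicator {u : ℝ | |u| < ε} fun u => |u| ^ (s - 1)

section singWeight

variable {s ε : ℝ}

lemma singWeight_nonneg (u : ℝ) : 0 ≤ singWeight s ε u :=
  indicator_nonneg (fun u _ => rpow_nonneg (abs_nonneg u) _) u

@[fun_prop]
lemma measurable_singWeight : Measurable (singWeight s ε) :=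
  (measurable_abs.pow_const _).indicator (measurableSet_lt measurable_abs measurable_const)

lemma integral_singWeight (hs : 0 < s) (hε : 0 < ε) :
    ∫ u, singWeight s ε u = 2 * (ε ^ s / s) := by
  have hcomp : singWeight s ε = fun u => (Iio ε).indicator (fun v => v ^ (s - 1)) |u| := by
    ext u
    simp only [singWeight, indicator_apply, mem_ofPred_eq, mem_Iio]
  have hIoo : Ioi (0 : ℝ) ∩ Iio ε = Ioo 0 ε := Ioi_inter_Iio
  rw [hcomp, integral_comp_abs, setIntegral_indicator measurableSet_Iio, hIoo,
    ← integral_Ioc_eq_integral_Ioo, ← intervalIntegral.integral_of_le hε.le,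
    integral_rpow (Or.inl (by linarith)), sub_add_cancel, zero_rpow hs.ne', sub_zero]

lemma integrable_singWeight (hs : 0 < s) (hε : 0 < ε) : Integrable (singWeight s ε) :=
  .of_integral_ne_zero <| by rw [integral_singWeight hs hε]; positivity

lemma singWeight_le_add (hs : s ≤ 1) (hε : 0 < ε) (R u : ℝ) :
    singWeight s R u ≤ singWeight s ε u + ε ^ (s - 1) := by
  have hε' : 0 ≤ ε ^ (s - 1) := rpow_nonneg hε.le _
  by_cases hR : |u| < R
  · by_cases hu : |u| < ε
    · simp [singWeight, hR, hu, hε']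
    · simpa [singWeight, hR, hu] using
        rpow_le_rpow_of_nonpos hε (not_lt.mp hu) (by linarith)
  · simpa [singWeight, hR] using add_nonneg (singWeight_nonneg u) hε'

end singWeight

lemma gaussianPDFReal_le (μ : ℝ) (v : ℝ≥0) (x : ℝ) :
    gaussianPDFReal μ v x ≤ (√(2 * π * v))⁻¹ := by
  rw [gaussianPDFReal]
  refine mul_le_of_le_one_right (by positivity) (exp_le_one_iff.mpr ?_)
  have : 0 ≤ (x - μ) ^ 2 / (2 * v) := by positivity
  rw [neg_div]; linarith

lemma coe_toNNReal_two_mul {t : ℝ} (ht : 0 < t) : (((2 * t).toNNReal : ℝ≥0) : ℝ) = 2 * t :=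
  Real.coe_toNNReal _ (by positivity)

lemma integral_singWeight_mul_gaussianPDFReal_le {s R t : ℝ} (hs0 : 0 < s) (hs1 : s ≤ 1)
    (ht : 0 < t) (c : ℝ) :
    ∫ u, singWeight s R u * gaussianPDFReal c (2 * t).toNNReal u
      ≤ ((s * √π)⁻¹ + 1) * t ^ ((s - 1) / 2) := by
  set ε := √t
  set G := gaussianPDFReal c (2 * t).toNNReal
  have hε : 0 < ε := sqrt_pos.mpr ht
  have hv : (2 * t).toNNReal ≠ 0 := by simpa using ht
  have hG_le : ∀ u, G u ≤ (2 * √π * ε)⁻¹ := fun u => by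
    have h := gaussianPDFReal_le c (2 * t).toNNReal u
    rwa [coe_toNNReal_two_mul ht, show 2 * π * (2 * t) = 2 ^ 2 * π * t by ring,
      sqrt_mul (by positivity), sqrt_mul (by positivity), sqrt_sq zero_le_two] at h
  have hpt : ∀ u, singWeight s R u * G u
      ≤ (2 * √π * ε)⁻¹ * singWeight s ε u + ε ^ (s - 1) * G u := fun u => by
    have hG0 : 0 ≤ G u := gaussianPDFReal_nonneg _ _ u
    calc singWeight s R u * G u ≤ (singWeight s ε u + ε ^ (s - 1)) * G u :=
          mul_le_mul_of_nonneg_right (singWeight_le_add hs1 hε R u) hG0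
      _ ≤ _ := by
          rw [add_mul, mul_comm (singWeight s ε u)]
          gcongr
          · exact singWeight_nonneg u
          · exact hG_le u
  have hint : Integrable
      (fun u => (2 * √π * ε)⁻¹ * singWeight s ε u + ε ^ (s - 1) * G u) :=
    ((integrable_singWeight hs0 hε).const_mul _).add
      ((integrable_gaussianPDFReal c _).const_mul _)
  calc ∫ u, singWeight s R u * G u
      ≤ ∫ u, (2 * √π * ε)⁻¹ * singWeight s ε u + ε ^ (s - 1) * G u :=
        integral_mono_of_nonneg
          (ae_of_all _ fun u => mul_nonneg (singWeight_nonneg u) (gaussianPDFReal_nonneg _ _ u))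
          hint (ae_of_all _ hpt)
    _ = (2 * √π * ε)⁻¹ * (2 * (ε ^ s / s)) + ε ^ (s - 1) := by
        rw [integral_add ((integrable_singWeight hs0 hε).const_mul _)
            ((integrable_gaussianPDFReal c _).const_mul _),
          integral_const_mul, integral_const_mul,
          integral_singWeight hs0 hε, integral_gaussianPDFReal_eq_one c hv, mul_one]
    _ = ((s * √π)⁻¹ + 1) * t ^ ((s - 1) / 2) := by
        have hpow : t ^ ((s - 1) / 2) = ε ^ (s - 1) := by
          rw [show ε = t ^ (1 / 2 : ℝ) from Real.sqrt_eq_rpow t, ← rpow_mul ht.le]; ring_nf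
        rw [hpow, rpow_sub_one hε.ne']
        field_simp

section HeatKernel

variable {ι : Type*} [Fintype ι]

lemma heatKernel_eq_prod_gaussianPDFReal {t : ℝ} (ht : 0 < t) (x y : EuclideanSpace ℝ ι) :
    (4 * π * t) ^ (-(Fintype.card ι : ℝ) / 2) * exp (-(‖x - y‖ ^ 2 / (4 * t)))
      = ∏ i, gaussianPDFReal (y i) (2 * t).toNNReal (x i) := by
  simp only [gaussianPDFReal, coe_toNNReal_two_mul ht]
  rw [Finset.prod_mul_distrib, Finset.prod_const, Finset.card_univ, ← exp_sum,
    EuclideanSpace.real_norm_sq_eq, Finset.sum_div, ← Finset.sum_neg_distrib]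
  congr 1
  · rw [show 2 * π * (2 * t) = 4 * π * t by ring, sqrt_eq_rpow, ← rpow_natCast,
      inv_rpow (by positivity), ← rpow_mul (by positivity), ← rpow_neg (by positivity)]
    ring_nf
  · congr 1
    refine Finset.sum_congr rfl fun i _ => ?_
    simp only [PiLp.sub_apply]
    ring

lemma lintegral_ofReal_mul_prod_gaussianPDFReal [DecidableEq ι] (i : ι) (c : ι → ℝ)
    {v : ℝ≥0} (hv : v ≠ 0) {f : ℝ → ℝ} (hf0 : ∀ u, 0 ≤ f u)
    (hf : Integrable fun u => f u * gaussianPDFReal (c i) v u) :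
    ∫⁻ x : EuclideanSpace ℝ ι, ENNReal.ofReal (f (x i) * ∏ j, gaussianPDFReal (c j) v (x j))
      = ENNReal.ofReal (∫ u, f u * gaussianPDFReal (c i) v u) := by
  set g : ι → ℝ → ℝ := fun j u => (if j = i then f u else 1) * gaussianPDFReal (c j) v u
  have hprod : ∀ z : ι → ℝ,
      f (z i) * ∏ j, gaussianPDFReal (c j) v (z j) = ∏ j, g j (z j) := fun z => by
    simp only [g, Finset.prod_mul_distrib, Fintype.prod_ite_eq']
  have hg_int : ∀ j, Integrable (g j) := fun j => by
    by_cases hj : j = i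
    · subst hj; simpa [g] using hf
    · simpa [g, hj] using integrable_gaussianPDFReal (c j) v
  have hg_nonneg : ∀ z : ι → ℝ, 0 ≤ ∏ j, g j (z j) := fun z =>
    Finset.prod_nonneg fun j _ => mul_nonneg (by split_ifs <;> simp [hf0])
      (gaussianPDFReal_nonneg _ _ _)
  rw [← (PiLp.volume_preserving_toLp ι).lintegral_comp_emb
    (MeasurableEquiv.toLp 2 (ι → ℝ)).measurableEmbedding]
  simp only [hprod]
  rw [volume_pi, ← ofReal_integral_eq_lintegral_ofReal (Integrable.fintype_prod hg_int)
    (ae_of_all _ hg_nonneg), integral_fintype_prod_eq_prod,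
    Fintype.prod_eq_single i fun j hj => by simp [g, hj, integral_gaussianPDFReal_eq_one _ hv]]
  simp [g]

lemma lintegral_singWeight_mul_heatKernel_le {s R t : ℝ} (hs0 : 0 < s)
    (hs1 : s ≤ 1) (hR : 0 < R) (ht : 0 < t) (i : ι) (y : EuclideanSpace ℝ ι) :
    ∫⁻ x : EuclideanSpace ℝ ι, ENNReal.ofReal (singWeight s R (x i) *
        ((4 * π * t) ^ (-(Fintype.card ι : ℝ) / 2) * exp (-(‖x - y‖ ^ 2 / (4 * t)))))
      ≤ ENNReal.ofReal (((s * √π)⁻¹ + 1) * t ^ ((s - 1) / 2)) := by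
  classical
  have hv : (2 * t).toNNReal ≠ 0 := by simpa using ht
  have hint : Integrable fun u => singWeight s R u * gaussianPDFReal (y i) (2 * t).toNNReal u :=
    (integrable_singWeight hs0 hR).mul_bdd (measurable_gaussianPDFReal _ _).aestronglyMeasurable
      (ae_of_all _ fun u => by
        rw [Real.norm_of_nonneg (gaussianPDFReal_nonneg _ _ u)]
        exact gaussianPDFReal_le _ _ u)
  simp_rw [heatKernel_eq_prod_gaussianPDFReal ht]
  rw [lintegral_ofReal_mul_prod_gaussianPDFReal i y.ofLp hv singWeight_nonneg hint]
  exact ENNReal.ofReal_le_ofReal (integral_singWeight_mul_gaussianPDFReal_le hs0 hs1 ht _)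

end HeatKernel

section Kernel

variable {d : ℕ} {σ lam : ℝ}

lemma rker_integrand_nonneg {t : ℝ} (ht : 0 < t) (x y : E d) :
    0 ≤ t ^ (σ / 2 - 1) * exp (-(lam * t)) *
      ((4 * π * t) ^ (-(d : ℝ) / 2) * exp (-(‖x - y‖ ^ 2 / (4 * t)))) := by
  positivity

lemma rker_nonneg (hσ : 0 < σ) (x y : E d) : 0 ≤ rker d σ lam x y :=
  mul_nonneg (inv_nonneg.2 (Gamma_pos_of_pos (half_pos hσ)).le)
    (setIntegral_nonneg measurableSet_Ioi fun _ ht => rker_integrand_nonneg ht x y)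

lemma ofReal_rker_le (hσ : 0 < σ) (x y : E d) :
    ENNReal.ofReal (rker d σ lam x y) ≤ ENNReal.ofReal (Gamma (σ / 2))⁻¹ *
      ∫⁻ t in Ioi 0, ENNReal.ofReal (t ^ (σ / 2 - 1) * exp (-(lam * t)) *
        ((4 * π * t) ^ (-(d : ℝ) / 2) * exp (-(‖x - y‖ ^ 2 / (4 * t))))) := by
  rw [rker, ENNReal.ofReal_mul (inv_nonneg.2 (Gamma_pos_of_pos (half_pos hσ)).le)]
  gcongr
  exact ofReal_integral_le_lintegral_ofReal
    ((ae_restrict_iff' measurableSet_Ioi).2 (ae_of_all _ fun _ ht => rker_integrand_nonneg ht x y))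

lemma lintegral_singWeight_mul_rker_integrand_le {s R t : ℝ} (hs0 : 0 < s)
    (hs1 : s ≤ 1) (hR : 0 < R) (ht : 0 < t) (i : Fin d) (y : E d) :
    ∫⁻ x, ENNReal.ofReal (singWeight s R (x i)) * ENNReal.ofReal (t ^ (σ / 2 - 1) *
        exp (-(lam * t)) * ((4 * π * t) ^ (-(d : ℝ) / 2) * exp (-(‖x - y‖ ^ 2 / (4 * t)))))
      ≤ ENNReal.ofReal ((s * √π)⁻¹ + 1) *
          ENNReal.ofReal (t ^ ((σ + s - 1) / 2 - 1) * exp (-(lam * t))) := by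
  set p := t ^ (σ / 2 - 1) * exp (-(lam * t))
  have hp : 0 ≤ p := by positivity
  have hheat := lintegral_singWeight_mul_heatKernel_le hs0 hs1 hR ht i y
  rw [Fintype.card_fin] at hheat
  calc _ = ENNReal.ofReal p * ∫⁻ x, ENNReal.ofReal (singWeight s R (x i) *
        ((4 * π * t) ^ (-(d : ℝ) / 2) * exp (-(‖x - y‖ ^ 2 / (4 * t))))) := by
        rw [← lintegral_const_mul' _ _ ENNReal.ofReal_ne_top]
        refine lintegral_congr fun x => ?_
        rw [← ENNReal.ofReal_mul (singWeight_nonneg _), ← ENNReal.ofReal_mul hp, mul_left_comm]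
    _ ≤ ENNReal.ofReal p * ENNReal.ofReal (((s * √π)⁻¹ + 1) * t ^ ((s - 1) / 2)) := by gcongr
    _ = _ := by
        rw [← ENNReal.ofReal_mul hp, ← ENNReal.ofReal_mul (by positivity),
          show (σ + s - 1) / 2 - 1 = (σ / 2 - 1) + (s - 1) / 2 by ring, rpow_add ht]
        simp only [p]
        ring_nf

lemma lintegral_singWeight_mul_rker_le {s R : ℝ} (hs0 : 0 < s) (hs1 : s ≤ 1)
    (hR : 0 < R) (hσ : 0 < σ) (hσs : 1 < σ + s) (hlam : 0 < lam) (i : Fin d) (y : E d) :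
    ∫⁻ x, ENNReal.ofReal (singWeight s R (x i) * rker d σ lam x y)
      ≤ ENNReal.ofReal ((Gamma (σ / 2))⁻¹ * ((s * √π)⁻¹ + 1) * Gamma ((σ + s - 1) / 2) *
          lam ^ (-((σ + s - 1) / 2))) := by
  have hΓ : 0 ≤ (Gamma (σ / 2))⁻¹ := inv_nonneg.2 (Gamma_pos_of_pos (half_pos hσ)).le
  set F : E d → ℝ → ℝ≥0∞ := fun x t => ENNReal.ofReal (singWeight s R (x i)) *
    ENNReal.ofReal (t ^ (σ / 2 - 1) * exp (-(lam * t)) *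
      ((4 * π * t) ^ (-(d : ℝ) / 2) * exp (-(‖x - y‖ ^ 2 / (4 * t)))))
  have hF_meas : Measurable (Function.uncurry F) := by
    simp only [Function.uncurry_def, F]
    fun_prop
  calc ∫⁻ x, ENNReal.ofReal (singWeight s R (x i) * rker d σ lam x y)
      ≤ ∫⁻ x, ENNReal.ofReal (Gamma (σ / 2))⁻¹ * ∫⁻ t in Ioi 0, F x t := lintegral_mono fun x => by
        rw [ENNReal.ofReal_mul (singWeight_nonneg _),
          lintegral_const_mul' _ _ ENNReal.ofReal_ne_top, mul_left_comm]
        gcongr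
        exact ofReal_rker_le hσ x y
    _ = ENNReal.ofReal (Gamma (σ / 2))⁻¹ * ∫⁻ t in Ioi 0, ∫⁻ x, F x t := by
        rw [lintegral_const_mul' _ _ ENNReal.ofReal_ne_top, lintegral_lintegral_swap
          hF_meas.aemeasurable]
    _ ≤ ENNReal.ofReal (Gamma (σ / 2))⁻¹ * ∫⁻ t in Ioi 0, ENNReal.ofReal ((s * √π)⁻¹ + 1) *
          ENNReal.ofReal (t ^ ((σ + s - 1) / 2 - 1) * exp (-(lam * t))) := by
        gcongr ENNReal.ofReal (Gamma (σ / 2))⁻¹ * ?_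
        exact setLIntegral_mono' measurableSet_Ioi fun t ht =>
          lintegral_singWeight_mul_rker_integrand_le hs0 hs1 hR ht i y
    _ = _ := by
        rw [lintegral_const_mul' _ _ ENNReal.ofReal_ne_top,
          lintegral_ofReal_rpow_mul_exp_neg_mul_Ioi (by linarith) hlam,
          ← ENNReal.ofReal_mul (by positivity), ← ENNReal.ofReal_mul hΓ]
        ring_nf

end Kernel

lemma exists_pos_mul_rpow_neg_le (A : ℝ) {a δ : ℝ} (ha : 0 < a) (hδ : 0 < δ) :
    ∃ lam : ℝ, 0 < lam ∧ A * lam ^ (-a) ≤ δ := by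
  have h : Tendsto (fun lam : ℝ => A * lam ^ (-a)) atTop (𝓝 0) := by
    simpa using (tendsto_rpow_neg_atTop ha).const_mul A
  obtain ⟨lam, hle, hpos⟩ := ((h.eventually (ge_mem_nhds hδ)).and (eventually_gt_atTop 0)).exists
  exact ⟨lam, hpos, hle⟩

/-- a vector field dominated by `1_{|x₁|<1} |x₁|^{s−1}` (`0 < s < 1`)
belongs to the Kato class `K^{d+1}_0`. -/
theorem statement1 (d : ℕ) (hd : 3 ≤ d) (s : ℝ) (hs0 : 0 < s) (hs1 : s < 1)
    (b : E d → E d)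
    (hb : ∀ x : E d,
      ‖b x‖ ≤ Set.indicator {x : E d | |x ⟨0, by omega⟩| < 1}
        (fun x : E d => |x ⟨0, by omega⟩| ^ (s - 1)) x) :
    ∀ δ : ℝ, 0 < δ → ∃ lam : ℝ, 0 < lam ∧
      ∀ᵐ y : E d ∂volume, (∫ x, ‖b x‖ * rker d 1 lam x y) ≤ δ := by
  intro δ hδ
  obtain ⟨lam, hlam, hδlam⟩ := exists_pos_mul_rpow_neg_le
    ((Gamma (1 / 2))⁻¹ * ((s * √π)⁻¹ + 1) * Gamma ((1 + s - 1) / 2))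
    (show 0 < (1 + s - 1) / 2 by linarith) hδ
  refine ⟨lam, hlam, ae_of_all _ fun y => ?_⟩
  have hdom : ∀ x, ‖b x‖ * rker d 1 lam x y
      ≤ singWeight s 1 (x ⟨0, by omega⟩) * rker d 1 lam x y := fun x =>
    mul_le_mul_of_nonneg_right (by simpa [singWeight, indicator_apply] using hb x)
      (rker_nonneg one_pos x y)
  rw [← ENNReal.ofReal_le_ofReal_iff hδ.le]
  calc ENNReal.ofReal (∫ x, ‖b x‖ * rker d 1 lam x y)
      ≤ ∫⁻ x, ENNReal.ofReal (‖b x‖ * rker d 1 lam x y) :=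
        ofReal_integral_le_lintegral_ofReal
          (ae_of_all _ fun x => mul_nonneg (norm_nonneg _) (rker_nonneg one_pos x y))
    _ ≤ ∫⁻ x, ENNReal.ofReal (singWeight s 1 (x ⟨0, by omega⟩) * rker d 1 lam x y) :=
        lintegral_mono fun x => ENNReal.ofReal_le_ofReal (hdom x)
    _ ≤ ENNReal.ofReal δ :=
        (lintegral_singWeight_mul_rker_le hs0 hs1.le one_pos one_pos (by linarith) hlam _ y).trans
          (ENNReal.ofReal_le_ofReal hδlam)

end
end

section
/- Let d ≥ 1, ε > 0, and let φ be a real-valued Schwartz function on ℝ^d with φ not identically zero. Let e^{εΔ} denote convolution with the Gaussian (4πε)^{−d/2} e^{−|x|²/(4ε)}. Then the pointwise Cauchy–Schwarz bound (e^{εΔ}(φ ∇φ))(x)² ≤ (e^{εΔ}(φ²))(x) · (e^{εΔ}(|∇φ|²))(x) holds for all x, and consequently ∫_{ℝ^d} |∇ ( (e^{εΔ}(φ²))^{1/2} )(x)|² dx ≤ ∫_{ℝ^d} |∇φ(x)|² dx. -/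
open MeasureTheory Filter Topology

noncomputable section

/-- The heat kernel: `e^{εΔ}` is convolution with `(4πε)^{−d/2} e^{−|z|²/(4ε)}`. -/
def heatK (d : ℕ) (ε : ℝ) (z : E d) : ℝ :=
  (4 * Real.pi * ε) ^ (-(d : ℝ) / 2) * Real.exp (-(‖z‖ ^ 2 / (4 * ε)))

/-!
The first inequality is the Cauchy–Schwarz inequality for the positive measure
`heatK d ε (x - y) dy`, applied to `φ` and `∇φ`. For the second, `u = e^{εΔ}(φ²)` is positive
and `∇u = 2 e^{εΔ}(φ ∇φ)`, so pointwise `|∇√u|² = |e^{εΔ}(φ ∇φ)|² / u ≤ e^{εΔ}(|∇φ|²)`.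
Integrating in `x` and using that the heat kernel has total mass one gives
`∫ |∇√u|² ≤ ∫ |∇φ|²`.
-/

open InnerProductSpace
open scoped Convolution Gradient SchwartzMap

section HeatKernel

variable {d : ℕ} {ε : ℝ}

lemma heatK_pos (hε : 0 < ε) (z : E d) : 0 < heatK d ε z := by
  unfold heatK
  have : 0 < 4 * Real.pi * ε := by positivity
  positivity

lemma continuous_heatK : Continuous (heatK d ε) := by
  unfold heatK
  fun_prop

lemma integral_heatK (hε : 0 < ε) : ∫ z, heatK d ε z = 1 := by
  have hgauss := GaussianFourier.integral_rexp_neg_mul_sq_norm (V := E d)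
    (inv_pos.2 (by positivity : 0 < 4 * ε))
  simp only [finrank_euclideanSpace_fin] at hgauss
  have hπ : Real.pi / (4 * ε)⁻¹ = 4 * Real.pi * ε := by field_simp
  simp_rw [heatK, integral_const_mul, div_eq_inv_mul, ← neg_mul, hgauss, hπ,
    ← Real.rpow_add (by positivity : 0 < 4 * Real.pi * ε)]
  ring_nf
  exact Real.rpow_zero _

lemma integrable_heatK (hε : 0 < ε) : Integrable (heatK d ε) :=
  .of_integral_ne_zero (by simp [integral_heatK hε])

end HeatKernel

theorem norm_integral_smul_smul_sq_le {α G : Type*} [MeasurableSpace α] {μ : Measure α}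
    [NormedAddCommGroup G] [NormedSpace ℝ G] {k f : α → ℝ} {g : α → G} (hk : 0 ≤ k)
    (hk_meas : AEStronglyMeasurable k μ) (hf : AEStronglyMeasurable f μ)
    (hg : AEStronglyMeasurable g μ) (hkf : Integrable (fun a => k a * f a ^ 2) μ)
    (hkg : Integrable (fun a => k a * ‖g a‖ ^ 2) μ) :
    ‖∫ a, k a • (f a • g a) ∂μ‖ ^ 2 ≤ (∫ a, k a * f a ^ 2 ∂μ) * ∫ a, k a * ‖g a‖ ^ 2 ∂μ := by
  set F : α → ℝ := fun a => √(k a) * |f a|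
  set G : α → ℝ := fun a => √(k a) * ‖g a‖
  have hF2 : ∀ a, F a ^ 2 = k a * f a ^ 2 := fun a => by
    simp only [F, mul_pow, Real.sq_sqrt (hk a), sq_abs]
  have hG2 : ∀ a, G a ^ 2 = k a * ‖g a‖ ^ 2 := fun a => by
    simp only [G, mul_pow, Real.sq_sqrt (hk a)]
  have hFG : ∀ a, ‖k a • (f a • g a)‖ = F a * G a := fun a => by
    rw [norm_smul, norm_smul, Real.norm_of_nonneg (hk a), Real.norm_eq_abs,
      ← Real.mul_self_sqrt (hk a)]
    ring
  have hF : MemLp F (ENNReal.ofReal 2) μ := by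
    rw [ENNReal.ofReal_ofNat, memLp_two_iff_integrable_sq (by fun_prop)]
    simpa only [hF2] using hkf
  have hG : MemLp G (ENNReal.ofReal 2) μ := by
    rw [ENNReal.ofReal_ofNat, memLp_two_iff_integrable_sq (by fun_prop)]
    simpa only [hG2] using hkg
  have holder := integral_mul_le_Lp_mul_Lq_of_nonneg Real.HolderConjugate.two_two
    (.of_forall fun a => by positivity) (.of_forall fun a => by positivity) hF hG
  simp only [Real.rpow_two, hF2, hG2, ← Real.sqrt_eq_rpow] at holder
  calc ‖∫ a, k a • (f a • g a) ∂μ‖ ^ 2 ≤ (∫ a, F a * G a ∂μ) ^ 2 := by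
        gcongr
        exact (norm_integral_le_integral_norm _).trans_eq (by simp_rw [hFG])
    _ ≤ (√(∫ a, k a * f a ^ 2 ∂μ) * √(∫ a, k a * ‖g a‖ ^ 2 ∂μ)) ^ 2 := by
        gcongr
    _ = _ := by
        rw [mul_pow, Real.sq_sqrt (integral_nonneg fun a => mul_nonneg (hk a) (sq_nonneg _)),
          Real.sq_sqrt (integral_nonneg fun a => mul_nonneg (hk a) (sq_nonneg _))]

theorem HasGradientAt.sqrt {V : Type*} [NormedAddCommGroup V] [InnerProductSpace ℝ V]
    [CompleteSpace V] {f : V → ℝ} {f' x : V} (hf : HasGradientAt f f' x) (hx : f x ≠ 0) :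
    HasGradientAt (fun y => √(f y)) ((1 / (2 * √(f x))) • f') x := by
  rw [hasGradientAt_iff_hasFDerivAt, map_smul]
  exact (hasGradientAt_iff_hasFDerivAt.1 hf).sqrt hx

section KernelSmoothing

variable {V : Type*} [NormedAddCommGroup V] [InnerProductSpace ℝ V] [FiniteDimensional ℝ V]
  [MeasurableSpace V] [BorelSpace V]

lemma integral_mul_comp_sub (K h : V → ℝ) (x : V) :
    ∫ y, K (x - y) * h y = ∫ w, K w * h (x - w) := by
  rw [← integral_sub_left_eq_self _ _ x]
  simp only [sub_sub_cancel]

theorem hasGradientAt_integral_mul_sub {K h : V → ℝ} {h' : V → V} (hK : Integrable K)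
    (hh : ∀ y, HasGradientAt h (h' y) y) (hh' : Continuous h') {C₀ C₁ : ℝ}
    (hC₀ : ∀ y, ‖h y‖ ≤ C₀) (hC₁ : ∀ y, ‖h' y‖ ≤ C₁) (x : V) :
    HasGradientAt (fun z => ∫ y, K (z - y) * h y) (∫ y, K (x - y) • h' y) x := by
  have h_cont : Continuous h :=
    continuous_iff_continuousAt.2 fun y => (hh y).differentiableAt.continuousAt
  have hderiv_shift :
      toDual ℝ V (∫ y, K (x - y) • h' y) = ∫ w, K w • toDual ℝ V (h' (x - w)) := by
    rw [← integral_sub_left_eq_self _ _ x]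
    simp_rw [sub_sub_cancel, ← map_smul]
    exact ((toDual ℝ V).toLinearIsometry.integral_comp_comm _).symm
  -- After substituting `y = z - w`, the variable `z` only enters through the differentiable `h`.
  rw [hasGradientAt_iff_hasFDerivAt, hderiv_shift]
  simp only [integral_mul_comp_sub K h]
  refine hasFDerivAt_integral_of_dominated_of_fderiv_le
    (F' := fun z w => K w • toDual ℝ V (h' (z - w))) (bound := fun w => ‖K w‖ * C₁)
    Filter.univ_mem (.of_forall fun z => ?_) ?_ ?_ (.of_forall fun w z _ => ?_)
    (hK.norm.mul_const C₁) (.of_forall fun w z _ => ?_)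
  · exact hK.aestronglyMeasurable.mul
      (by fun_prop : Continuous fun w => h (z - w)).aestronglyMeasurable
  · exact hK.mul_bdd (by fun_prop : Continuous fun w => h (x - w)).aestronglyMeasurable
      (.of_forall fun w => hC₀ (x - w))
  · exact hK.aestronglyMeasurable.smul
      ((toDual ℝ V).continuous.comp (hh'.comp (by fun_prop))).aestronglyMeasurable
  · rw [norm_smul, LinearIsometryEquiv.norm_map]
    exact mul_le_mul_of_nonneg_left (hC₁ _) (norm_nonneg _)
  · simpa using (((hh (z - w)).hasFDerivAt.comp z ((hasFDerivAt_id z).sub_const w)).const_mul (K w))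

end KernelSmoothing

section KernelAverage

variable {V : Type*} [NormedAddCommGroup V] [InnerProductSpace ℝ V] [FiniteDimensional ℝ V]
  [MeasurableSpace V] [BorelSpace V] {K g : V → ℝ}

lemma integral_mul_sub_eq_convolution (K g : V → ℝ) :
    (fun x => ∫ y, K (x - y) * g y) = g ⋆[ContinuousLinearMap.mul ℝ ℝ] K := by
  ext x
  simp only [convolution_def, ContinuousLinearMap.mul_apply', mul_comm]

lemma Integrable.integral_mul_sub (hK : Integrable K) (hg : Integrable g) :
    Integrable (fun x => ∫ y, K (x - y) * g y) := by
  rw [integral_mul_sub_eq_convolution]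
  exact hg.integrable_convolution _ hK

lemma integral_integral_mul_sub (hK : Integrable K) (hg : Integrable g) :
    ∫ x, ∫ y, K (x - y) * g y = (∫ x, K x) * ∫ x, g x := by
  rw [integral_mul_sub_eq_convolution, integral_convolution _ hg hK,
    ContinuousLinearMap.mul_apply', mul_comm]

end KernelAverage

namespace SchwartzMap

variable {V : Type*} [NormedAddCommGroup V] [InnerProductSpace ℝ V] [CompleteSpace V]
  (φ : 𝓢(V, ℝ))

@[fun_prop]
lemma continuous_gradient : Continuous (∇ φ) :=
  (toDual ℝ V).symm.continuous.comp (fderivCLM ℝ V ℝ φ).continuous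

lemma norm_gradient (y : V) : ‖∇ φ y‖ = ‖fderivCLM ℝ V ℝ φ y‖ :=
  (toDual ℝ V).symm.norm_map _

lemma norm_gradient_le (y : V) : ‖∇ φ y‖ ≤ SchwartzMap.seminorm ℝ 0 0 (fderivCLM ℝ V ℝ φ) :=
  (norm_gradient φ y).trans_le (norm_le_seminorm ℝ _ y)

lemma hasGradientAt_sq (y : V) : HasGradientAt (fun y => φ y ^ 2) ((2 * φ y) • ∇ φ y) y := by
  rw [hasGradientAt_iff_hasFDerivAt, map_smul, toDual_gradient]
  simpa using (φ.hasFDerivAt y).pow 2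

variable [FiniteDimensional ℝ V] [MeasurableSpace V] [BorelSpace V] in
lemma integrable_sq_norm_gradient : Integrable (fun y => ‖∇ φ y‖ ^ 2) := by
  simpa only [norm_gradient] using (fderivCLM ℝ V ℝ φ).memLp 2 |>.integrable_norm_pow two_ne_zero

end SchwartzMap

section HeatSemigroup

variable {d : ℕ} {ε : ℝ}

lemma integrable_heatK_sub_mul (hε : 0 < ε) {g : E d → ℝ} (hg : Continuous g) {C : ℝ}
    (hC : ∀ y, ‖g y‖ ≤ C) (x : E d) : Integrable (fun y => heatK d ε (x - y) * g y) :=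
  ((integrable_heatK hε).comp_sub_left x).mul_bdd hg.aestronglyMeasurable (.of_forall hC)

variable (hε : 0 < ε) (φ : 𝓢(E d, ℝ))
include hε

lemma integrable_heatK_sub_mul_sq (x : E d) :
    Integrable (fun y => heatK d ε (x - y) * φ y ^ 2) :=
  integrable_heatK_sub_mul hε (by fun_prop) (fun y => by
    rw [norm_pow]
    exact pow_le_pow_left₀ (norm_nonneg _) (φ.norm_le_seminorm ℝ y) 2) x

lemma integrable_heatK_sub_mul_sq_norm_gradient (x : E d) :
    Integrable (fun y => heatK d ε (x - y) * ‖∇ φ y‖ ^ 2) :=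
  integrable_heatK_sub_mul hε (by fun_prop) (fun y => by
    rw [norm_pow, norm_norm]
    exact pow_le_pow_left₀ (norm_nonneg _) (φ.norm_gradient_le y) 2) x

theorem norm_heat_smul_gradient_sq_le (x : E d) :
    ‖∫ y, heatK d ε (x - y) • (φ y • ∇ φ y)‖ ^ 2 ≤
      (∫ y, heatK d ε (x - y) * φ y ^ 2) * ∫ y, heatK d ε (x - y) * ‖∇ φ y‖ ^ 2 :=
  norm_integral_smul_smul_sq_le (fun y => (heatK_pos hε _).le)
    (continuous_heatK.comp (by fun_prop)).aestronglyMeasurable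
    φ.continuous.aestronglyMeasurable φ.continuous_gradient.aestronglyMeasurable
    (integrable_heatK_sub_mul_sq hε φ x) (integrable_heatK_sub_mul_sq_norm_gradient hε φ x)

theorem hasGradientAt_heat_sq (x : E d) :
    HasGradientAt (fun z => ∫ y, heatK d ε (z - y) * φ y ^ 2)
      ((2 : ℝ) • ∫ y, heatK d ε (x - y) • (φ y • ∇ φ y)) x := by
  have hC := φ.norm_le_seminorm ℝ
  have hC' := φ.norm_gradient_le
  have key := hasGradientAt_integral_mul_sub (integrable_heatK hε) φ.hasGradientAt_sq
    ((continuous_const.mul φ.continuous).smul φ.continuous_gradient)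
    (fun y => by
      rw [norm_pow]
      exact pow_le_pow_left₀ (norm_nonneg _) (hC y) 2)
    (fun y => by
      rw [norm_smul, norm_mul, Real.norm_two, mul_assoc]
      exact mul_le_mul_of_nonneg_left
        (mul_le_mul (hC y) (hC' y) (norm_nonneg _) ((norm_nonneg _).trans (hC y))) two_pos.le) x
  convert key using 1
  rw [← integral_smul]
  refine integral_congr_ae (.of_forall fun y => ?_)
  module

lemma integral_heatK_sub_mul_sq_pos (hφ : ∃ y, φ y ≠ 0) (x : E d) :
    0 < ∫ y, heatK d ε (x - y) * φ y ^ 2 := by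
  obtain ⟨y₀, hy₀⟩ := hφ
  exact integral_pos_of_integrable_nonneg_nonzero (x := y₀)
    ((continuous_heatK.comp (by fun_prop)).mul (by fun_prop))
    (integrable_heatK_sub_mul_sq hε φ x) (fun y => mul_nonneg (heatK_pos hε _).le (sq_nonneg _))
    (mul_pos (heatK_pos hε _) (pow_pos (abs_pos.2 hy₀) 2 |>.trans_eq (sq_abs _))).ne'

theorem sq_norm_gradient_sqrt_heat_sq_le (hφ : ∃ y, φ y ≠ 0) (x : E d) :
    ‖∇ (fun z => √(∫ y, heatK d ε (z - y) * φ y ^ 2)) x‖ ^ 2 ≤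
      ∫ y, heatK d ε (x - y) * ‖∇ φ y‖ ^ 2 := by
  have hu := integral_heatK_sub_mul_sq_pos hε φ hφ x
  rw [((hasGradientAt_heat_sq hε φ x).sqrt hu.ne').gradient, smul_smul,
    show 1 / (2 * √(∫ y, heatK d ε (x - y) * φ y ^ 2)) * 2 =
      (√(∫ y, heatK d ε (x - y) * φ y ^ 2))⁻¹ by field_simp,
    norm_smul, mul_pow, norm_inv, Real.norm_of_nonneg (Real.sqrt_nonneg _), inv_pow,
    Real.sq_sqrt hu.le, inv_mul_le_iff₀ hu]
  exact norm_heat_smul_gradient_sq_le hε φ x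

end HeatSemigroup

theorem statement9_general (d : ℕ) (ε : ℝ) (hε : 0 < ε)
    (φ : SchwartzMap (E d) ℝ) (hφ : ∃ x, φ x ≠ 0) :
    (∀ x : E d,
      ‖∫ y, heatK d ε (x - y) • (φ y • gradient (⇑φ) y)‖ ^ 2 ≤
        (∫ y, heatK d ε (x - y) * (φ y) ^ 2) *
          ∫ y, heatK d ε (x - y) * ‖gradient (⇑φ) y‖ ^ 2) ∧
    (∫ x, ‖gradient
        (fun z : E d => Real.sqrt (∫ y, heatK d ε (z - y) * (φ y) ^ 2)) x‖ ^ 2) ≤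
      ∫ x, ‖gradient (⇑φ) x‖ ^ 2 := by
  refine ⟨norm_heat_smul_gradient_sq_le hε φ, ?_⟩
  calc _ ≤ ∫ x, ∫ y, heatK d ε (x - y) * ‖∇ φ y‖ ^ 2 :=
        integral_mono_of_nonneg (.of_forall fun x => by positivity)
          (Integrable.integral_mul_sub (integrable_heatK hε) φ.integrable_sq_norm_gradient)
          (.of_forall (sq_norm_gradient_sqrt_heat_sq_le hε φ hφ))
    _ = ∫ x, ‖∇ φ x‖ ^ 2 := by
        rw [integral_integral_mul_sub (integrable_heatK hε) φ.integrable_sq_norm_gradient,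
          integral_heatK hε, one_mul]

/-- the pointwise Cauchy–Schwarz bound
`(e^{εΔ}(φ∇φ))² ≤ e^{εΔ}(φ²) · e^{εΔ}(|∇φ|²)` and the resulting Dirichlet-energy bound
`∫ |∇(e^{εΔ}(φ²))^{1/2}|² ≤ ∫ |∇φ|²`. -/
theorem statement9 (d : ℕ) (hd : 1 ≤ d) (ε : ℝ) (hε : 0 < ε)
    (φ : SchwartzMap (E d) ℝ) (hφ : ∃ x, φ x ≠ 0) :
    (∀ x : E d,
      ‖∫ y, heatK d ε (x - y) • (φ y • gradient (⇑φ) y)‖ ^ 2 ≤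
        (∫ y, heatK d ε (x - y) * (φ y) ^ 2) *
          ∫ y, heatK d ε (x - y) * ‖gradient (⇑φ) y‖ ^ 2) ∧
    (∫ x, ‖gradient
        (fun z : E d => Real.sqrt (∫ y, heatK d ε (z - y) * (φ y) ^ 2)) x‖ ^ 2) ≤
      ∫ x, ‖gradient (⇑φ) x‖ ^ 2 :=
  statement9_general d ε hε φ hφ
end
end
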